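/- arXiv:2412.18744 — 8 statements merged into one kernel-verified Lean document; each statement's English description precedes it below -/
import Mathlib

section
/- For all positive integers k and nonnegative integers n, the binomial coefficient identity \binom{k+n}{k}^2 = \sum_{i=0}^{k} \binom{k}{i}^2 \binom{2k+n-i}{2k} holds. -/
-- (b+1) * C(a+b+1, b+1) = (a+b+1) * C(a+b, b)
private lemma succ_choose (a b : ℕ) :
    (b + 1) * Nat.choose (a + b + 1) (b + 1) = (a + b + 1) * Nat.choose (a + b) b := by
  simpa [Nat.succ_eq_add_one, Nat.mul_comm] using (Nat.add_one_mul_choose_eq (a + b) b).symm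

-- absorption: C(a+b+1, a) * (b+1) = (a+b+1) * C(a+b, a)
private lemma succ_choose' (a b : ℕ) :
    (b + 1) * Nat.choose (a + b + 1) a = (a + b + 1) * Nat.choose (a + b) a := by
  have h1 : Nat.choose (a + b + 1) (b + 1) = Nat.choose (a + b + 1) a := by
    have := Nat.choose_symm (n := a + b + 1) (k := a) (by omega)
    simpa [show a + b + 1 - a = b + 1 by omega] using this
  have h2 : Nat.choose (a + b) b = Nat.choose (a + b) a := by
    have := Nat.choose_symm (n := a + b) (k := a) (by omega)
    simpa [show a + b - a = b by omega] using this
  have := succ_choose a b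
  rw [h1, h2] at this
  exact this

private lemma key (k n i : ℕ) (hik : i ≤ k) :
    (n + 1) ^ 2 * ((Nat.choose k i) ^ 2 * Nat.choose (2 * k + (n + 1) - i) (2 * k))
      + (i + 1) ^ 2 * (Nat.choose k (i + 1)) ^ 2 * Nat.choose (2 * k + n - i) (2 * k)
    = (n + k + 1) ^ 2 * ((Nat.choose k i) ^ 2 * Nat.choose (2 * k + n - i) (2 * k))
      + i ^ 2 * (Nat.choose k i) ^ 2 * Nat.choose (2 * k + (n + 1) - i) (2 * k) := by
  -- replace (i+1)^2 * C(k,i+1)^2 with (k-i)^2 * C(k,i)^2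
  have hrepl : (i + 1) ^ 2 * (Nat.choose k (i + 1)) ^ 2
      = (k - i) ^ 2 * (Nat.choose k i) ^ 2 := by
    have h := Nat.choose_succ_right_eq k i
    calc (i + 1) ^ 2 * (Nat.choose k (i + 1)) ^ 2
        = (Nat.choose k (i + 1) * (i + 1)) ^ 2 := by ring
      _ = (Nat.choose k i * (k - i)) ^ 2 := by rw [h]
      _ = (k - i) ^ 2 * (Nat.choose k i) ^ 2 := by ring
  rw [hrepl]
  rcases le_or_gt i n with hin | hin
  · -- i ≤ n : use the multiplicative relation
    obtain ⟨r, hr⟩ : ∃ r, n = i + r := ⟨n - i, by omega⟩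
    obtain ⟨d, hd⟩ : ∃ d, k = i + d := ⟨k - i, by omega⟩
    subst hr
    have e1 : 2 * k + (i + r + 1) - i = 2 * k + r + 1 := by omega
    have e2 : 2 * k + (i + r) - i = 2 * k + r := by omega
    rw [e1, e2]
    have h := succ_choose' (2 * k) r
    -- h : (r+1) * C(2k+r+1, 2k) = (2k+r+1) * C(2k+r, 2k)
    set A := Nat.choose (2 * k + r + 1) (2 * k) with hA
    set B := Nat.choose (2 * k + r) (2 * k) with hB
    set C := Nat.choose k i with hC
    have hki : k - i = d := by omega
    rw [hki]
    zify at h ⊢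
    have hk' : (k : ℤ) = i + d := by exact_mod_cast hd
    rw [hk'] at h ⊢
    linear_combination ((2 * (i:ℤ) + r + 1) * (C:ℤ)^2) * h
  · -- n < i : binomials vanish (or equal 1)
    have hB : Nat.choose (2 * k + n - i) (2 * k) = 0 := by
      apply Nat.choose_eq_zero_of_lt; omega
    rcases eq_or_lt_of_le (Nat.succ_le_of_lt hin) with hi1 | hi1
    · -- i = n + 1
      have e1 : 2 * k + (n + 1) - i = 2 * k := by omega
      have hi2 : i = n + 1 := by omega
      rw [hB, e1, Nat.choose_self, hi2]
      ring
    · have hA : Nat.choose (2 * k + (n + 1) - i) (2 * k) = 0 := by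
        apply Nat.choose_eq_zero_of_lt; omega
      rw [hA, hB]
      ring

private lemma li_shanlan (k n : ℕ) :
    (Nat.choose (k + n) k) ^ 2
      = ∑ i ∈ Finset.range (k + 1),
          (Nat.choose k i) ^ 2 * Nat.choose (2 * k + n - i) (2 * k) := by
  induction n with
  | zero =>
    rw [Finset.sum_eq_single_of_mem 0 (Finset.mem_range.mpr (by omega))]
    · simp
    · intro i hi hi0
      have hik : i ≤ k := by simpa using Nat.lt_succ_iff.mp (Finset.mem_range.mp hi)
      have : Nat.choose (2 * k + 0 - i) (2 * k) = 0 := by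
        apply Nat.choose_eq_zero_of_lt; omega
      rw [this, Nat.mul_zero]
  | succ n ih =>
    -- sum the key identity over i ∈ range (k+1)
    have hsum : (n + 1) ^ 2 * (∑ i ∈ Finset.range (k + 1),
          (Nat.choose k i) ^ 2 * Nat.choose (2 * k + (n + 1) - i) (2 * k))
        + (∑ i ∈ Finset.range (k + 1),
          (i + 1) ^ 2 * (Nat.choose k (i + 1)) ^ 2 * Nat.choose (2 * k + n - i) (2 * k))
      = (n + k + 1) ^ 2 * (∑ i ∈ Finset.range (k + 1),
          (Nat.choose k i) ^ 2 * Nat.choose (2 * k + n - i) (2 * k))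
        + (∑ i ∈ Finset.range (k + 1),
          i ^ 2 * (Nat.choose k i) ^ 2 * Nat.choose (2 * k + (n + 1) - i) (2 * k)) := by
      rw [Finset.mul_sum, Finset.mul_sum, ← Finset.sum_add_distrib, ← Finset.sum_add_distrib]
      apply Finset.sum_congr rfl
      intro i hi
      exact key k n i (Nat.lt_succ_iff.mp (Finset.mem_range.mp hi))
    -- telescoping: the two extra sums are equal
    have htel : (∑ i ∈ Finset.range (k + 1),
          (i + 1) ^ 2 * (Nat.choose k (i + 1)) ^ 2 * Nat.choose (2 * k + n - i) (2 * k))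
        = (∑ i ∈ Finset.range (k + 1),
          i ^ 2 * (Nat.choose k i) ^ 2 * Nat.choose (2 * k + (n + 1) - i) (2 * k)) := by
      have hg : ∀ i, i ≤ k →
          (i + 1) ^ 2 * (Nat.choose k (i + 1)) ^ 2 * Nat.choose (2 * k + n - i) (2 * k)
          = (fun j => j ^ 2 * (Nat.choose k j) ^ 2 * Nat.choose (2 * k + (n + 1) - j) (2 * k)) (i + 1) := by
        intro i hik
        simp only
        congr 2
        omega
      set f := fun j => j ^ 2 * (Nat.choose k j) ^ 2 * Nat.choose (2 * k + (n + 1) - j) (2 * k) with hf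
      rw [Finset.sum_congr rfl (fun i hi => hg i (Nat.lt_succ_iff.mp (Finset.mem_range.mp hi)))]
      have hf0 : f 0 = 0 := by simp [hf]
      have hfk : f (k + 1) = 0 := by simp [hf, Nat.choose_succ_self]
      calc ∑ i ∈ Finset.range (k + 1), f (i + 1)
          = ∑ i ∈ Finset.range (k + 1), f (i + 1) + f 0 := by rw [hf0]; simp
        _ = ∑ i ∈ Finset.range (k + 2), f i := (Finset.sum_range_succ' f (k + 1)).symm
        _ = ∑ i ∈ Finset.range (k + 1), f i + f (k + 1) := Finset.sum_range_succ f (k + 1)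
        _ = ∑ i ∈ Finset.range (k + 1), f i := by rw [hfk, Nat.add_zero]
    rw [htel] at hsum
    have hcancel := Nat.add_right_cancel hsum
    rw [← ih] at hcancel
    -- relation: (n+1) * C(k+n+1, k) = (k+n+1) * C(k+n, k)
    have hrel : (n + 1) * Nat.choose (k + (n + 1)) k = (k + n + 1) * Nat.choose (k + n) k := by
      have := succ_choose' k n
      have e : k + n + 1 = k + (n + 1) := by omega
      rw [e] at this ⊢
      omega
    have hsq : (n + 1) ^ 2 * (Nat.choose (k + (n + 1)) k) ^ 2
        = (n + k + 1) ^ 2 * (Nat.choose (k + n) k) ^ 2 := by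
      calc (n + 1) ^ 2 * (Nat.choose (k + (n + 1)) k) ^ 2
          = ((n + 1) * Nat.choose (k + (n + 1)) k) ^ 2 := by ring
        _ = ((k + n + 1) * Nat.choose (k + n) k) ^ 2 := by rw [hrel]
        _ = (n + k + 1) ^ 2 * (Nat.choose (k + n) k) ^ 2 := by ring
    have : (n + 1) ^ 2 * (Nat.choose (k + (n + 1)) k) ^ 2
        = (n + 1) ^ 2 * (∑ i ∈ Finset.range (k + 1),
            (Nat.choose k i) ^ 2 * Nat.choose (2 * k + (n + 1) - i) (2 * k)) := by
      rw [hsq, hcancel]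
    exact Nat.eq_of_mul_eq_mul_left (by positivity) this

theorem stmt0 (k n : ℕ) (hk : 0 < k) :
    (Nat.choose (k + n) k) ^ 2
      = ∑ i ∈ Finset.range (k + 1),
          (Nat.choose k i) ^ 2 * Nat.choose (2 * k + n - i) (2 * k) := by
  exact li_shanlan k n
end

section
/- Let M = {1^k, 2^k} be the multiset with k copies of 1 and k copies of 2. The number of permutations (words) of M having exactly i descents equals \binom{k}{i}^2. -/
open Finset
namespace Stmt2Aux

def zc {n : ℕ} (w : Fin n → Fin 2) : ℕ :=
  (Finset.univ.filter (fun j : Fin n => w j = 0)).card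

def pdes {n : ℕ} (w : Fin n → Fin 2) : ℕ :=
  (Finset.univ.filter (fun p : Fin n × Fin n =>
      (p.2 : ℕ) = (p.1 : ℕ) + 1 ∧ w p.2 < w p.1)).card

lemma pdes_eq {n : ℕ} (w : Fin (n + 1) → Fin 2) :
    pdes w = (Finset.univ.filter (fun j : Fin n => w j.succ < w j.castSucc)).card := by
  rw [pdes]
  have h : (Finset.univ.filter (fun p : Fin (n+1) × Fin (n+1) =>
      (p.2 : ℕ) = (p.1 : ℕ) + 1 ∧ w p.2 < w p.1)) =
      (Finset.univ.filter (fun j : Fin n => w j.succ < w j.castSucc)).image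
        (fun j => (j.castSucc, j.succ)) := by
    ext p
    simp only [mem_filter, mem_image, mem_univ, true_and]
    constructor
    · rintro ⟨hval, hlt⟩
      have h1 : (p.1 : ℕ) < n := by have := p.2.isLt; omega
      have e1 : (⟨(p.1 : ℕ), h1⟩ : Fin n).castSucc = p.1 := by
        apply Fin.ext; simp
      have e2 : (⟨(p.1 : ℕ), h1⟩ : Fin n).succ = p.2 := by
        apply Fin.ext; simp [hval]
      refine ⟨⟨(p.1 : ℕ), h1⟩, ?_, ?_⟩
      · rw [e1, e2]; exact hlt
      · rw [e1, e2]
    · rintro ⟨j, hj, rfl⟩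
      exact ⟨by simp, hj⟩
  rw [h, Finset.card_image_of_injective]
  intro a b hab
  exact Fin.castSucc_injective _ (congrArg Prod.fst hab)

lemma zc_cons {n : ℕ} (a : Fin 2) (w : Fin n → Fin 2) :
    zc (Fin.cons a w) = (if a = 0 then 1 else 0) + zc w := by
  rw [zc, zc, Finset.card_filter, Finset.card_filter, Fin.sum_univ_succ]
  simp [Fin.cons_zero, Fin.cons_succ]

lemma pdes_cons {n : ℕ} (a : Fin 2) (w : Fin (n + 1) → Fin 2) :
    pdes (Fin.cons a w) = (if w 0 < a then 1 else 0) + pdes w := by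
  rw [pdes_eq (Fin.cons a w), pdes_eq w, Finset.card_filter, Finset.card_filter,
    Fin.sum_univ_succ]
  congr 1

lemma zc_empty (w : Fin 0 → Fin 2) : zc w = 0 := by simp [zc]

lemma pdes_one (w : Fin 1 → Fin 2) : pdes w = 0 := by rw [pdes_eq]; simp

lemma card_filter_cons {n : ℕ} (P : (Fin (n + 1) → Fin 2) → Prop) [DecidablePred P] :
    ((Finset.univ : Finset (Fin (n + 1) → Fin 2)).filter P).card =
      ((Finset.univ : Finset (Fin n → Fin 2)).filter (fun w => P (Fin.cons 0 w))).card +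
      ((Finset.univ : Finset (Fin n → Fin 2)).filter (fun w => P (Fin.cons 1 w))).card := by
  rw [Finset.card_filter, Finset.card_filter, Finset.card_filter]
  rw [← Equiv.sum_comp (Fin.consEquiv (fun _ : Fin (n+1) => Fin 2))
    (fun w => if P w then 1 else 0)]
  rw [Fintype.sum_prod_type, Fin.sum_univ_two]
  rfl

def Tc (n q i : ℕ) : ℕ :=
  ((Finset.univ : Finset (Fin n → Fin 2)).filter (fun w => zc w = q ∧ pdes w = i)).card

def Tp (n q i : ℕ) : ℕ :=
  ((Finset.univ : Finset (Fin (n + 1) → Fin 2)).filter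
    (fun w => zc w = q ∧ pdes (Fin.cons 1 w) = i)).card

lemma Tc_succ (n q i : ℕ) :
    Tc (n + 2) q i = (if q = 0 then 0 else Tc (n + 1) (q - 1) i) + Tp n q i := by
  rw [Tc, card_filter_cons]
  congr 1
  · rcases q with _ | q'
    · rw [if_pos rfl]
      rw [Finset.card_eq_zero, Finset.filter_eq_empty_iff]
      intro w _
      rw [zc_cons]
      simp
    · rw [if_neg (Nat.succ_ne_zero q'), Nat.add_sub_cancel, Tc]
      apply congrArg Finset.card
      apply Finset.filter_congr
      intro w _
      rw [zc_cons, pdes_cons]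
      have : ¬ (w 0 < (0 : Fin 2)) := by simp
      simp [this]
      omega
  · rw [Tp]
    apply congrArg Finset.card
    apply Finset.filter_congr
    intro w _
    rw [zc_cons]
    simp

lemma Tp_succ (n q i : ℕ) :
    Tp (n + 1) q i =
      (if q = 0 ∨ i = 0 then 0 else Tc (n + 1) (q - 1) (i - 1)) + Tp n q i := by
  rw [Tp, card_filter_cons]
  congr 1
  · have key : ∀ w : Fin (n + 1) → Fin 2,
        pdes (Fin.cons 1 (Fin.cons 0 w)) = 1 + pdes w := by
      intro w
      rw [pdes_cons, pdes_cons]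
      have h0 : (Fin.cons (0 : Fin 2) w : Fin (n + 2) → Fin 2) 0 = 0 := by simp
      have : ¬ (w 0 < (0 : Fin 2)) := by simp
      simp [h0, this]
    rcases q with _ | q'
    · rw [if_pos (Or.inl rfl)]
      rw [Finset.card_eq_zero, Finset.filter_eq_empty_iff]
      intro w _
      rw [zc_cons]
      simp
    · rcases i with _ | i'
      · rw [if_pos (Or.inr rfl)]
        rw [Finset.card_eq_zero, Finset.filter_eq_empty_iff]
        intro w _
        rw [key]
        simp
      · rw [if_neg (by simp), Nat.add_sub_cancel, Nat.add_sub_cancel, Tc]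
        apply congrArg Finset.card
        apply Finset.filter_congr
        intro w _
        rw [zc_cons, key]
        simp
        omega
  · rw [Tp]
    apply congrArg Finset.card
    apply Finset.filter_congr
    intro w _
    rw [zc_cons, pdes_cons]
    have h1 : (Fin.cons (1 : Fin 2) w : Fin (n + 2) → Fin 2) 0 = 1 := by simp
    have : ¬ ((Fin.cons (1 : Fin 2) w : Fin (n + 2) → Fin 2) 0 < (1 : Fin 2)) := by
      rw [h1]; simp
    simp [this]


lemma zc0 (w : Fin 0 → Fin 2) : zc (Fin.cons (0 : Fin 2) w) = 1 := by
  simp [zc_cons, zc_empty]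

lemma zc1 (w : Fin 0 → Fin 2) : zc (Fin.cons (1 : Fin 2) w) = 0 := by
  simp [zc_cons, zc_empty]

lemma pd0 (a : Fin 2) (w : Fin 0 → Fin 2) : pdes (Fin.cons a w) = 0 := pdes_one _

lemma pd10 (w : Fin 0 → Fin 2) : pdes (Fin.cons 1 (Fin.cons (0 : Fin 2) w)) = 1 := by
  rw [pdes_cons, pdes_one]
  simp [Fin.cons_zero]

lemma pd11 (w : Fin 0 → Fin 2) : pdes (Fin.cons 1 (Fin.cons (1 : Fin 2) w)) = 0 := by
  rw [pdes_cons, pdes_one]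
  simp [Fin.cons_zero]

lemma Tc_one (q i : ℕ) :
    Tc 1 q i = (if q = 1 ∧ i = 0 then 1 else 0) + (if q = 0 ∧ i = 0 then 1 else 0) := by
  rw [Tc, card_filter_cons]
  congr 1
  · rw [Finset.univ_unique, Finset.filter_singleton]
    simp only [zc0, pd0]
    split_ifs <;> simp only [Finset.card_singleton, Finset.card_empty] <;> omega
  · rw [Finset.univ_unique, Finset.filter_singleton]
    simp only [zc1, pd0]
    split_ifs <;> simp only [Finset.card_singleton, Finset.card_empty] <;> omega

lemma Tp_zero (q i : ℕ) :
    Tp 0 q i = (if q = 1 ∧ i = 1 then 1 else 0) + (if q = 0 ∧ i = 0 then 1 else 0) := by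
  rw [Tp, card_filter_cons]
  congr 1
  · rw [Finset.univ_unique, Finset.filter_singleton]
    simp only [zc0, pd10]
    split_ifs <;> simp only [Finset.card_singleton, Finset.card_empty] <;> omega
  · rw [Finset.univ_unique, Finset.filter_singleton]
    simp only [zc1, pd11]
    split_ifs <;> simp only [Finset.card_singleton, Finset.card_empty] <;> omega

def c1 (n q i : ℕ) : ℕ :=
  if q ≤ n + 1 then Nat.choose q i * Nat.choose (n + 1 - q) i else 0

def c2 (n q i : ℕ) : ℕ :=
  match q, i with
  | 0, 0 => 1
  | 0, _ + 1 => 0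
  | _ + 1, 0 => 0
  | q' + 1, i' + 1 =>
    if q' + 1 ≤ n + 1 then Nat.choose q' i' * Nat.choose (n + 1 - q') (i' + 1) else 0

lemma c1_rec (n q i : ℕ) :
    c1 (n + 1) q i = (if q = 0 then 0 else c1 n (q - 1) i) + c2 n q i := by
  rcases q with _ | q'
  · rcases i with _ | i' <;> simp [c1, c2]
  · rw [if_neg (Nat.succ_ne_zero q'), Nat.add_sub_cancel]
    rcases i with _ | i'
    · simp only [c1, c2, Nat.choose_zero_right, one_mul, Nat.add_zero]
      by_cases h : q' ≤ n + 1
      · rw [if_pos (by omega), if_pos h]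
      · rw [if_neg (by omega), if_neg h]
    · simp only [c1, c2]
      by_cases h : q' ≤ n
      · rw [if_pos (by omega), if_pos (by omega), if_pos (by omega)]
        have e1 : n + 1 + 1 - (q' + 1) = n + 1 - q' := by omega
        rw [e1, Nat.choose_succ_succ q' i', Nat.add_mul, Nat.add_comm]
      · by_cases h2 : q' = n + 1
        · subst h2
          rw [if_pos (by omega), if_pos (by omega), if_neg (by omega)]
          have e1 : n + 1 + 1 - (n + 1 + 1) = 0 := by omega
          have e2 : n + 1 - (n + 1) = 0 := by omega
          rw [e1, e2, Nat.choose_zero_succ, Nat.mul_zero, Nat.mul_zero]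
        · rw [if_neg (by omega), if_neg (by omega), if_neg (by omega)]

lemma c2_rec (n q i : ℕ) :
    c2 (n + 1) q i = (if q = 0 ∨ i = 0 then 0 else c1 n (q - 1) (i - 1)) + c2 n q i := by
  rcases q with _ | q'
  · rcases i with _ | i' <;> simp [c2]
  · rcases i with _ | i'
    · simp [c2]
    · rw [if_neg (by simp), Nat.add_sub_cancel, Nat.add_sub_cancel]
      simp only [c1, c2]
      by_cases h : q' ≤ n
      · rw [if_pos (by omega), if_pos (by omega), if_pos (by omega)]
        have e1 : n + 1 + 1 - q' = (n + 1 - q') + 1 := by omega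
        rw [e1, Nat.choose_succ_succ (n + 1 - q') i', Nat.mul_add]
      · by_cases h2 : q' = n + 1
        · subst h2
          rw [if_pos (by omega), if_pos (by omega), if_neg (by omega)]
          have e1 : n + 1 + 1 - (n + 1) = 1 := by omega
          have e2 : n + 1 - (n + 1) = 0 := by omega
          rw [e1, e2, Nat.add_zero]
          rcases i' with _ | i''
          · rfl
          · rw [Nat.choose_zero_succ, Nat.mul_zero]
            have : Nat.choose 1 (i'' + 1 + 1) = 0 := by
              apply Nat.choose_eq_zero_of_lt; omega
            rw [this, Nat.mul_zero]
        · rw [if_neg (by omega), if_neg (by omega), if_neg (by omega)]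

lemma main (n : ℕ) : ∀ q i : ℕ, Tc (n + 1) q i = c1 n q i ∧ Tp n q i = c2 n q i := by
  induction n with
  | zero =>
    intro q i
    constructor
    · rw [Tc_one]
      rcases q with _ | q <;> rcases i with _ | i <;> simp [c1]
    · rw [Tp_zero]
      rcases q with _ | q
      · rcases i with _ | i <;> simp [c2]
      · rcases i with _ | i
        · simp [c2]
        · simp only [c2]
          rcases q with _ | q
          · rcases i with _ | i <;> simp
          · rw [if_neg (by omega)]
            simp
  | succ n ih =>
    intro q i
    constructor
    · rw [Tc_succ, c1_rec, (ih q i).2]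
      congr 1
      rcases q with _ | q'
      · rfl
      · rw [if_neg (Nat.succ_ne_zero q'), if_neg (Nat.succ_ne_zero q'),
          (ih (q' + 1 - 1) i).1]
    · rw [Tp_succ, c2_rec, (ih q i).2]
      congr 1
      by_cases h : q = 0 ∨ i = 0
      · rw [if_pos h, if_pos h]
      · rw [if_neg h, if_neg h, (ih (q - 1) (i - 1)).1]

end Stmt2Aux

/-- Words over the multiset `{1^k, 2^k}`, encoded as functions `Fin (2*k) → Fin 2`
(`0` represents the letter `1`, `1` represents the letter `2`).  A descent is a
pair of adjacent positions `(j, j+1)` with `w j > w (j+1)`. -/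
theorem stmt2 (k i : ℕ) (hk : 0 < k) :
    ((Finset.univ : Finset (Fin (2 * k) → Fin 2)).filter (fun w =>
        (Finset.univ.filter (fun j : Fin (2 * k) => w j = 0)).card = k ∧
        (Finset.univ.filter (fun p : Fin (2 * k) × Fin (2 * k) =>
            (p.2 : ℕ) = (p.1 : ℕ) + 1 ∧ w p.2 < w p.1)).card = i)).card
      = (Nat.choose k i) ^ 2 := by
  obtain ⟨k', rfl⟩ : ∃ k', k = k' + 1 := ⟨k - 1, by omega⟩
  show Stmt2Aux.Tc (2 * (k' + 1)) (k' + 1) i = _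
  have e : 2 * (k' + 1) = 2 * k' + 1 + 1 := by ring
  rw [e, (Stmt2Aux.main (2 * k' + 1) (k' + 1) i).1, Stmt2Aux.c1, if_pos (by omega)]
  have e2 : 2 * k' + 1 + 1 - (k' + 1) = k' + 1 := by omega
  rw [e2, pow_two]
end

section
/- For all integers \ell \geq 0 and n \geq 0, the identity \sum_{j=n}^{\lfloor (\ell+2n+3)/2 \rfloor} \binom{\ell+2n+3}{2j} \binom{j}{n} = 2^{\ell+2} \left( \binom{n+\ell+3}{n} + \binom{n+\ell+2}{n-1} \right) holds, where the term \binom{n+\ell+2}{n-1} is 0 when n = 0. -/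
open Finset

private def ff (m n : ℕ) : ℕ := ∑ j ∈ range (m+1), Nat.choose m (2*j) * Nat.choose j n
private def gg (m n : ℕ) : ℕ := ∑ j ∈ range (m+1), Nat.choose m (2*j+1) * Nat.choose j n

private lemma grec (m n : ℕ) : gg (m+1) n = gg m n + ff m n := by
  unfold ff gg
  rw [Finset.sum_range_succ]
  have h0 : Nat.choose (m+1) (2*(m+1)+1) = 0 := Nat.choose_eq_zero_of_lt (by omega)
  rw [h0, Nat.zero_mul, Nat.add_zero, ← Finset.sum_add_distrib]
  apply Finset.sum_congr rfl
  intro j _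
  have : Nat.choose (m+1) (2*j+1) = Nat.choose m (2*j) + Nat.choose m (2*j+1) :=
    Nat.choose_succ_succ m (2*j)
  rw [this]; ring

private lemma aux_shift (m n : ℕ) :
    (∑ j ∈ range (m+1), Nat.choose m (2*(j+1)) * Nat.choose (j+1) n)
      + Nat.choose m 0 * Nat.choose 0 n = ff m n := by
  have h1 := Finset.sum_range_succ' (fun j => Nat.choose m (2*j) * Nat.choose j n) (m+1)
  have h2 := Finset.sum_range_succ (fun j => Nat.choose m (2*j) * Nat.choose j n) (m+1)
  have h0 : Nat.choose m (2*(m+1)) = 0 := Nat.choose_eq_zero_of_lt (by omega)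
  unfold ff
  simp only [h0, Nat.zero_mul, Nat.add_zero] at h2
  rw [← h2, h1]

private lemma frec (m n : ℕ) : ff (m+1) n
    = ff m n + ∑ j ∈ range (m+1), Nat.choose m (2*j+1) * Nat.choose (j+1) n := by
  have key : ff (m+1) n = (∑ j ∈ range (m+1), Nat.choose (m+1) (2*(j+1)) * Nat.choose (j+1) n)
      + Nat.choose (m+1) 0 * Nat.choose 0 n := by
    unfold ff
    exact Finset.sum_range_succ' (fun j => Nat.choose (m+1) (2*j) * Nat.choose j n) (m+1)
  rw [key]
  have split : ∀ j, Nat.choose (m+1) (2*(j+1)) * Nat.choose (j+1) n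
      = Nat.choose m (2*j+1) * Nat.choose (j+1) n + Nat.choose m (2*(j+1)) * Nat.choose (j+1) n := by
    intro j
    have : Nat.choose (m+1) (2*(j+1)) = Nat.choose m (2*j+1) + Nat.choose m (2*j+1+1) :=
      Nat.choose_succ_succ m (2*j+1)
    rw [this]; ring_nf
  simp only [split, Finset.sum_add_distrib]
  rw [← aux_shift m n]
  simp [Nat.choose_zero_right]
  ring

private lemma gbase (n : ℕ) : gg (2*n+1) n = 1 := by
  unfold gg
  rw [Finset.sum_eq_single n]
  · simp
  · intro j _ hj
    rcases Nat.lt_or_ge j n with h | h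
    · rw [Nat.choose_eq_zero_of_lt h, Nat.mul_zero]
    · rw [Nat.choose_eq_zero_of_lt (show 2*n+1 < 2*j+1 by omega), Nat.zero_mul]
  · intro h; exfalso; apply h; simp [Finset.mem_range]; omega

private lemma fbase (n : ℕ) : ff (2*n+1) n = 2*n+1 := by
  unfold ff
  rw [Finset.sum_eq_single n]
  · rw [Nat.choose_self, Nat.mul_one]
    have h := Nat.choose_symm (show 2*n ≤ 2*n+1 by omega)
    simp only [show 2*n+1 - 2*n = 1 by omega] at h
    rw [← h, Nat.choose_one_right]
  · intro j _ hj
    rcases Nat.lt_or_ge j n with h | h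
    · rw [Nat.choose_eq_zero_of_lt h, Nat.mul_zero]
    · rw [Nat.choose_eq_zero_of_lt (show 2*n+1 < 2*j by omega), Nat.zero_mul]
  · intro h; exfalso; apply h; simp [Finset.mem_range]; omega

private lemma symm_aux (a b : ℕ) : Nat.choose (a+b) a = Nat.choose (a+b) b := by
  have h := Nat.choose_symm (show b ≤ a + b by omega)
  simpa [show a + b - b = a by omega] using h

private lemma closed : ∀ m n k, m = 2*n+1+k →
    gg m n = 2^k * Nat.choose (n+k) n ∧
    ff m n = 2^k * (Nat.choose (n+1+k) n + Nat.choose (n+k) (k+1)) := by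
  intro m
  induction m with
  | zero => intro n k h; omega
  | succ m ih =>
    intro n k hm
    match k with
    | 0 =>
      have hn : m + 1 = 2*n+1 := by omega
      rw [hn, gbase, fbase]
      constructor
      · simp
      · simp [Nat.choose_succ_self_right, Nat.choose_one_right, Nat.choose_succ_self]
        omega
    | k'+1 =>
      have hm' : m = 2*n+1+k' := by omega
      obtain ⟨hg, hf⟩ := ih n k' hm'
      have key : Nat.choose (n+k') (k'+1) + Nat.choose (n+k') n = Nat.choose (n+1+k') n := by
        match n with
        | 0 => simp [Nat.choose_succ_self]
        | n'+1 =>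
          have hs : Nat.choose (n'+1+k') (k'+1) = Nat.choose (n'+1+k') n' := by
            have := (symm_aux n' (k'+1)).symm
            rwa [show n' + (k'+1) = n'+1+k' by omega] at this
          rw [hs, show n'+1+1+k' = (n'+1+k')+1 by omega]
          exact (Nat.choose_succ_succ (n'+1+k') n').symm
      constructor
      · rw [grec, hg, hf]
        rw [show n + (k'+1) = n+1+k' by omega, ← key]
        ring
      · rw [frec]
        match n with
        | 0 =>
          have hsum : (∑ j ∈ range (m+1), Nat.choose m (2*j+1) * Nat.choose (j+1) 0) = gg m 0 := by
            unfold gg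
            apply Finset.sum_congr rfl
            intro j _
            simp
          rw [hsum, hf, hg]
          simp [Nat.choose_succ_self]
          ring
        | n'+1 =>
          have hsum : (∑ j ∈ range (m+1), Nat.choose m (2*j+1) * Nat.choose (j+1) (n'+1))
              = gg m n' + gg m (n'+1) := by
            unfold gg
            rw [← Finset.sum_add_distrib]
            apply Finset.sum_congr rfl
            intro j _
            rw [Nat.choose_succ_succ j n']
            ring
          have hg' : gg m n' = 2^(k'+2) * Nat.choose (n'+(k'+2)) n' :=
            (ih n' (k'+2) (by omega)).1
          rw [hsum, hf, hg, hg']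
          have e1 : Nat.choose (n'+1+(k'+1)) (k'+1+1) = Nat.choose (n'+(k'+2)) n' := by
            rw [show n'+1+(k'+1) = n'+(k'+2) by omega, show k'+1+1 = k'+2 by omega]
            exact (symm_aux n' (k'+2)).symm
          have e2 : Nat.choose (n'+1+1+(k'+1)) (n'+1)
              = Nat.choose (n'+(k'+2)) n' + Nat.choose (n'+1+1+k') (n'+1) := by
            rw [show n'+1+1+(k'+1) = (n'+(k'+2))+1 by omega,
              Nat.choose_succ_succ (n'+(k'+2)) n',
              show n'+(k'+2) = n'+1+1+k' by omega]
          rw [e1, e2, ← key]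
          ring

theorem stmt6 (l n : ℕ) :
    ∑ j ∈ Finset.Icc n ((l + 2 * n + 3) / 2),
        Nat.choose (l + 2 * n + 3) (2 * j) * Nat.choose j n
      = 2 ^ (l + 2) *
          (Nat.choose (n + l + 3) n + Nat.choose (n + l + 2) (l + 3)) := by
  set m := l + 2 * n + 3 with hmdef
  have hicc : ∑ j ∈ Finset.Icc n (m / 2),
      Nat.choose m (2*j) * Nat.choose j n = ff m n := by
    unfold ff
    apply Finset.sum_subset
    · intro j hj
      simp only [Finset.mem_Icc] at hj
      simp only [Finset.mem_range]
      omega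
    · intro j hj hnot
      simp only [Finset.mem_Icc] at hnot
      simp only [Finset.mem_range] at hj
      rcases Nat.lt_or_ge j n with h | h
      · rw [Nat.choose_eq_zero_of_lt h, Nat.mul_zero]
      · have : m < 2*j := by omega
        rw [Nat.choose_eq_zero_of_lt this, Nat.zero_mul]
  rw [hicc]
  have hcl := (closed m n (l+2) (by omega)).2
  rw [hcl, show n+1+(l+2) = n+l+3 by omega, show n+(l+2) = n+l+2 by omega]
end

section
/- For all positive integers k and nonnegative integers n, the (k+1)×(k+1) determinant det_{0 \le i,j \le k} \binom{n+i+j}{n+i-j} equals the k×k determinant det_{1 \le i,j \le k} \binom{n+i+j-1}{2j-1}. -/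
/-- `det_{0 ≤ i,j ≤ k} C(n+i+j, n+i-j) = det_{1 ≤ i,j ≤ k} C(n+i+j-1, 2j-1)`,
with the convention `C(a,b) = 0` for `b < 0` (encoded by the `if`) or `b > a`.
On the right-hand side the `k×k` matrix is indexed with `i, j` running over
`1, …, k` (here zero-based: entry `(i,j)` is `C(n+(i+1)+(j+1)-1, 2(j+1)-1)`). -/
theorem stmt9 (k n : ℕ) (hk : 0 < k) :
    Matrix.det (fun i j : Fin (k + 1) =>
        if (j : ℕ) ≤ n + i then ((Nat.choose (n + i + j) (n + i - j) : ℤ)) else 0)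
      = Matrix.det (fun i j : Fin k =>
          ((Nat.choose (n + i + j + 1) (2 * j + 1) : ℤ))) := by
  set M : Matrix (Fin (k + 1)) (Fin (k + 1)) ℤ :=
    fun i j => (Nat.choose (n + i + j) (2 * j) : ℤ) with hM
  have hA : (fun i j : Fin (k + 1) =>
      if (j : ℕ) ≤ n + i then ((Nat.choose (n + i + j) (n + i - j) : ℤ)) else 0) = M := by
    funext i j
    simp only [hM]
    split
    · next h =>
      congr 1
      have := Nat.choose_symm (n := n + i + j) (k := 2 * j) (by omega)
      have h2 : n + i + j - 2 * j = n + i - j := by omega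
      rw [h2] at this
      exact this
    · next h =>
      have : (Nat.choose (n + i + j) (2 * j)) = 0 :=
        Nat.choose_eq_zero_of_lt (by omega)
      rw [this]; simp
  rw [hA]
  set D : Matrix (Fin (k + 1)) (Fin (k + 1)) ℤ :=
    Fin.cases (M 0) (fun i j => M i.succ j - M i.castSucc j) with hD
  have hdet : M.det = D.det := by
    apply Matrix.det_eq_of_forall_row_eq_smul_add_pred (c := fun _ => 1)
    · intro j; simp [hD]
    · intro i j; simp [hD]
  rw [hdet, Matrix.det_succ_column_zero]
  have hD0 : ∀ i : Fin (k + 1), D i 0 = if i = 0 then 1 else 0 := by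
    intro i
    induction i using Fin.cases with
    | zero => simp [hD, hM]
    | succ i =>
      simp only [hD, Fin.cases_succ, hM]
      simp [Fin.val_succ, Fin.coe_castSucc, Fin.succ_ne_zero]
  rw [Fintype.sum_eq_single 0]
  · have h00 : D 0 0 = 1 := by simp [hD, hM]
    rw [h00]
    simp only [Fin.val_zero, pow_zero, one_mul, mul_one, Fin.succAbove_zero]
    congr 1
    funext i j
    rw [Matrix.submatrix_apply]
    simp only [Matrix.submatrix_apply, hD, Fin.cases_succ, hM,
      Fin.val_succ, Fin.coe_castSucc]
    have key : Nat.choose (n + (i + 1) + (j + 1)) (2 * (j + 1))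
        = Nat.choose (n + i + j + 1) (2 * j + 1) + Nat.choose (n + i + (j + 1)) (2 * (j + 1)) := by
      have h1 : n + (i + 1) + (j + 1) = (n + i + j + 1) + 1 := by ring
      have h2 : 2 * ((j:ℕ) + 1) = (2 * (j:ℕ) + 1) + 1 := by ring
      have h3 : n + i + (j + 1) = n + i + j + 1 := by ring
      rw [h1, h2, h3, Nat.choose_succ_succ']
    push_cast [key]
    ring
  · intro i hi
    rw [hD0, if_neg hi]
    ring
end

section
/- For all positive integers t, k and nonnegative integers n, the t×t determinant det_{1 \le i,j \le t} \binom{n+k}{n+i-j} equals \prod_{i=1}^{t} \prod_{j=1}^{k} \frac{i+j+n-1}{i+j-1} (MacMahon's box formula). -/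
open Finset Matrix

private lemma qfact_ne (m : ℕ) : ((Nat.factorial m : ℚ)) ≠ 0 := by
  exact_mod_cast m.factorial_ne_zero

private lemma aux_prod (k a : ℕ) :
    (∏ j ∈ Finset.range k, ((a : ℚ) + (j + 1)))
      = (Nat.factorial (a + k) : ℚ) / (Nat.factorial a : ℚ) := by
  induction k with
  | zero => simp [div_self (qfact_ne a)]
  | succ k ih =>
      rw [Finset.prod_range_succ, ih, show a + (k+1) = (a+k)+1 from rfl,
        Nat.factorial_succ]
      push_cast
      field_simp
      ring

private lemma colop (t k n : ℕ) (i j : Fin t) :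
    (∑ r : Fin t,
      (if (r : ℕ) ≤ n + i then ((Nat.choose (n + k) (n + i - r) : ℚ)) else 0) *
        (Nat.choose (j : ℕ) (r : ℕ) : ℚ))
      = (Nat.choose (n + k + j) (n + i) : ℚ) := by
  set c := n + (i : ℕ) with hc
  set F : ℕ → ℚ := fun b =>
    if b ≤ c then ((Nat.choose (j : ℕ) b * Nat.choose (n + k) (c - b) : ℕ) : ℚ) else 0 with hF
  have hv : Nat.choose (n + k + (j : ℕ)) c
      = ∑ b ∈ range (c + 1), Nat.choose (j : ℕ) b * Nat.choose (n + k) (c - b) := by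
    rw [show n + k + (j : ℕ) = (j : ℕ) + (n + k) by ring, Nat.add_choose_eq,
      Finset.Nat.sum_antidiagonal_eq_sum_range_succ_mk]
  have hbig : ∀ {s : Finset ℕ}, s ⊆ range (t + (c + 1)) →
      (∀ b ∈ range (t + (c + 1)), b ∉ s → F b = 0) →
      ∑ b ∈ s, F b = ∑ b ∈ range (t + (c + 1)), F b := fun hs h0 =>
    Finset.sum_subset hs h0
  have h1 : (∑ r : Fin t,
      (if (r : ℕ) ≤ c then ((Nat.choose (n + k) (c - r) : ℚ)) else 0) *
        (Nat.choose (j : ℕ) (r : ℕ) : ℚ)) = ∑ b ∈ range (t + (c + 1)), F b := by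
    rw [Fin.sum_univ_eq_sum_range (fun b =>
      (if b ≤ c then ((Nat.choose (n + k) (c - b) : ℚ)) else 0) *
        (Nat.choose (j : ℕ) b : ℚ))]
    have : ∀ b ∈ range t,
        (if b ≤ c then ((Nat.choose (n + k) (c - b) : ℚ)) else 0) *
          (Nat.choose (j : ℕ) b : ℚ) = F b := by
      intro b _
      by_cases hb : b ≤ c
      · simp only [hF, hb, if_true, ← hc]
        push_cast
        ring
      · simp [hF, hb, ← hc]
    rw [Finset.sum_congr rfl this]
    refine hbig (Finset.range_subset_range.2 (by omega)) ?_
    intro b _ hb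
    rw [Finset.mem_range, not_lt] at hb
    have : ((j : ℕ)) < b := lt_of_lt_of_le j.2 hb
    simp [hF, Nat.choose_eq_zero_of_lt this]
  have h2 : ((Nat.choose (n + k + (j : ℕ)) c : ℕ) : ℚ) = ∑ b ∈ range (t + (c + 1)), F b := by
    rw [hv, Nat.cast_sum]
    have : ∀ b ∈ range (c + 1),
        ((Nat.choose (j : ℕ) b * Nat.choose (n + k) (c - b) : ℕ) : ℚ) = F b := by
      intro b hb
      rw [Finset.mem_range] at hb
      simp only [hF, if_pos (by omega : b ≤ c)]
    rw [Finset.sum_congr rfl this]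
    refine hbig (Finset.range_subset_range.2 (by omega)) ?_
    intro b _ hb
    rw [Finset.mem_range, not_lt] at hb
    have hbc : ¬ b ≤ c := by omega
    simp [hF, hbc]
  exact h1.trans h2.symm

private lemma aux_rhs (t k n : ℕ) :
    (∏ i ∈ Finset.Icc 1 t, ∏ j ∈ Finset.Icc 1 k,
        (((i : ℚ) + (j : ℚ) + (n : ℚ) - 1) / ((i : ℚ) + (j : ℚ) - 1)))
    = ∏ i ∈ range t,
        (((Nat.factorial (n + i + k) : ℚ) / (Nat.factorial (n + i) : ℚ))
          / ((Nat.factorial (i + k) : ℚ) / (Nat.factorial i : ℚ))) := by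
  rw [← Finset.Ico_add_one_right_eq_Icc, Finset.prod_Ico_eq_prod_range]
  refine Finset.prod_congr rfl ?_
  intro i _
  rw [← Finset.Ico_add_one_right_eq_Icc, Finset.prod_Ico_eq_prod_range]
  simp only [Nat.add_sub_cancel]
  have h1 : ∀ j ∈ range k,
      (((1 + i : ℕ) : ℚ) + ((1 + j : ℕ) : ℚ) + (n : ℚ) - 1)
        / (((1 + i : ℕ) : ℚ) + ((1 + j : ℕ) : ℚ) - 1)
      = (((n + i : ℕ) : ℚ) + ((j : ℚ) + 1)) / (((i : ℕ) : ℚ) + ((j : ℚ) + 1)) := by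
    intro j _
    have e1 : ((1 + i : ℕ) : ℚ) + ((1 + j : ℕ) : ℚ) + (n : ℚ) - 1
        = ((n + i : ℕ) : ℚ) + ((j : ℚ) + 1) := by push_cast; ring
    have e2 : ((1 + i : ℕ) : ℚ) + ((1 + j : ℕ) : ℚ) - 1
        = ((i : ℕ) : ℚ) + ((j : ℚ) + 1) := by push_cast; ring
    rw [e1, e2]
  rw [Finset.prod_congr rfl h1, Finset.prod_div_distrib, aux_prod, aux_prod]

/-- MacMahon's box formula:
`det_{1 ≤ i,j ≤ t} C(n+k, n+i-j) = ∏_{i=1}^t ∏_{j=1}^k (i+j+n-1)/(i+j-1)`.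
The matrix is indexed zero-based, so `n + i - j` below corresponds to the
one-based `n + i' - j'`; the `if` encodes `C(a,b) = 0` for `b < 0`. -/
theorem stmt10 (t k n : ℕ) (ht : 0 < t) (hk : 0 < k) :
    Matrix.det (fun i j : Fin t =>
        if (j : ℕ) ≤ n + i then ((Nat.choose (n + k) (n + i - j) : ℚ)) else 0)
      = ∏ i ∈ Finset.Icc 1 t, ∏ j ∈ Finset.Icc 1 k,
          ((i + j + n - 1 : ℚ) / (i + j - 1 : ℚ)) := by
  obtain ⟨m, rfl⟩ : ∃ m, t = m + 1 := ⟨t - 1, (Nat.succ_pred_eq_of_pos ht).symm⟩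
  have hdet :
      Matrix.det (fun i j : Fin (m + 1) =>
        if (j : ℕ) ≤ n + i then ((Nat.choose (n + k) (n + i - j) : ℚ)) else 0)
      = ∏ i ∈ range (m + 1),
          ((Nat.factorial (n + k + i) : ℚ) * (Nat.factorial i : ℚ))
          / ((Nat.factorial (k + i) : ℚ) * (Nat.factorial (n + i) : ℚ)) := by
    set M : Matrix (Fin (m + 1)) (Fin (m + 1)) ℚ := fun i j =>
      if (j : ℕ) ≤ n + i then ((Nat.choose (n + k) (n + i - j) : ℚ)) else 0 with hM
    set U : Matrix (Fin (m + 1)) (Fin (m + 1)) ℚ :=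
      fun r j => (Nat.choose (j : ℕ) (r : ℕ) : ℚ) with hU
    set N : Matrix (Fin (m + 1)) (Fin (m + 1)) ℚ :=
      fun i j => (Nat.choose (n + k + (j : ℕ)) (n + (i : ℕ)) : ℚ) with hN
    have hMU : M * U = N := by
      ext i j
      simp only [Matrix.mul_apply, hM, hN, hU]
      exact colop (m + 1) k n i j
    have hUtri : U.BlockTriangular id := by
      intro i j hij
      simp only [hU]
      exact_mod_cast Nat.choose_eq_zero_of_lt (by exact_mod_cast hij)
    have hUdet : U.det = 1 := by
      rw [Matrix.det_of_upperTriangular hUtri]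
      simp [hU]
    have h1 : M.det = N.det := by
      have h := Matrix.det_mul M U
      rw [hMU, hUdet, mul_one] at h
      exact h.symm
    have hNfac : N.det =
        (∏ j : Fin (m + 1),
            ((Nat.factorial (n + k + (j : ℕ)) : ℚ) / (Nat.factorial (k + (j : ℕ)) : ℚ)))
        * ((∏ i : Fin (m + 1),
            ((Nat.factorial (i : ℕ) : ℚ) / (Nat.factorial (n + (i : ℕ)) : ℚ)))
          * (Matrix.of (fun i j : Fin (m + 1) =>
              (Nat.choose (k + (j : ℕ)) (i : ℕ) : ℚ))).det) := by
      rw [← Matrix.det_mul_column, ← Matrix.det_mul_row]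
      congr 1
      ext i j
      simp only [hN, Matrix.of_apply]
      by_cases hij : (i : ℕ) ≤ k + (j : ℕ)
      · rw [Nat.cast_choose ℚ (by omega : n + (i : ℕ) ≤ n + k + (j : ℕ)),
          Nat.cast_choose ℚ hij,
          show n + k + (j : ℕ) - (n + (i : ℕ)) = k + (j : ℕ) - (i : ℕ) from by omega]
        field_simp
      · rw [Nat.choose_eq_zero_of_lt (by omega : n + k + (j : ℕ) < n + (i : ℕ)),
          Nat.choose_eq_zero_of_lt (by omega : k + (j : ℕ) < (i : ℕ))]
        simp
    have hK : (Matrix.of (fun i j : Fin (m + 1) =>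
          (Nat.choose (k + (j : ℕ)) (i : ℕ) : ℚ))).det
        = (∏ j : Fin (m + 1), ((Nat.factorial (j : ℕ) : ℚ))⁻¹)
          * (Nat.superFactorial m : ℚ) := by
      rw [← Matrix.det_transpose]
      have htr : (Matrix.of (fun i j : Fin (m + 1) =>
            (Nat.choose (k + (j : ℕ)) (i : ℕ) : ℚ)))ᵀ
          = Matrix.of (fun i j : Fin (m + 1) =>
              ((Nat.factorial (j : ℕ) : ℚ))⁻¹ *
                ((descPochhammer ℚ (j : ℕ)).eval ((k : ℚ) + ((i : ℕ) : ℚ)))) := by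
        ext i j
        simp only [Matrix.transpose_apply, Matrix.of_apply]
        rw [show ((k : ℚ) + ((i : ℕ) : ℚ)) = (((k + (i : ℕ) : ℕ)) : ℚ) from by push_cast; ring,
          descPochhammer_eval_eq_descFactorial,
          Nat.descFactorial_eq_factorial_mul_choose]
        push_cast
        rw [← mul_assoc, inv_mul_cancel₀ (qfact_ne (j : ℕ)), one_mul]
      rw [htr, Matrix.det_mul_row (fun j : Fin (m + 1) => ((Nat.factorial (j : ℕ) : ℚ))⁻¹)
        (fun i j : Fin (m + 1) => (descPochhammer ℚ (j : ℕ)).eval ((k : ℚ) + ((i : ℕ) : ℚ)))]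
      congr 1
      refine Eq.trans (Eq.symm (Matrix.det_eval_matrixOfPolynomials_eq_det_vandermonde
        (fun i : Fin (m + 1) => ((k : ℚ) + ((i : ℕ) : ℚ)))
        (fun j : Fin (m + 1) => descPochhammer ℚ (j : ℕ))
        (fun j => descPochhammer_natDegree (R := ℚ) _)
        (fun j => monic_descPochhammer ℚ _))) ?_
      have hadd := Matrix.det_vandermonde_add (fun i : Fin (m + 1) => ((i : ℕ) : ℚ)) (k : ℚ)
      rw [show (fun i : Fin (m + 1) => ((k : ℚ) + ((i : ℕ) : ℚ)))
          = (fun i : Fin (m + 1) => ((i : ℕ) : ℚ) + (k : ℚ)) from by funext i; ring, hadd,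
        Matrix.det_vandermonde_id_eq_superFactorial]
    have hsf : (Nat.superFactorial m : ℚ) = ∏ i ∈ range (m + 1), (Nat.factorial i : ℚ) := by
      rw [← Nat.prod_range_succ_factorial m]
      push_cast
      rfl
    rw [h1, hNfac, hK, hsf, Fin.prod_univ_eq_prod_range
        (fun j => ((Nat.factorial (n + k + j) : ℚ) / (Nat.factorial (k + j) : ℚ))),
      Fin.prod_univ_eq_prod_range
        (fun i => ((Nat.factorial i : ℚ) / (Nat.factorial (n + i) : ℚ))),
      Fin.prod_univ_eq_prod_range (fun j => ((Nat.factorial j : ℚ))⁻¹),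
      ← Finset.prod_mul_distrib, ← Finset.prod_mul_distrib, ← Finset.prod_mul_distrib]
    refine Finset.prod_congr rfl ?_
    intro i _
    field_simp
  rw [hdet, aux_rhs]
  refine Finset.prod_congr rfl ?_
  intro i _
  rw [show n + i + k = n + k + i from by ring, show i + k = k + i from by ring]
  field_simp
end

section
/- For all positive integers k and t and all nonnegative integers n, the product \prod_{i=1}^{k} \frac{(n+k+t-1)! \, (i-1)!}{(n+i-1)! \, (t+k-i)! \, (n+t+k-i)^{k-i}} equals \prod_{i=1}^{t} \prod_{j=1}^{k} \frac{i+j+n-1}{i+j-1}. -/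
open Finset

lemma keyL (b k : ℕ) : (((b+k).factorial : ℚ))^k
    = (∏ m ∈ range k, ((b+1+m).factorial : ℚ)) * ∏ m ∈ range k, ((b+1+m : ℕ) : ℚ)^m := by
  induction k with
  | zero => simp
  | succ k ih =>
    rw [prod_range_succ, prod_range_succ]
    rw [show b + (k+1) = (b+k)+1 from by omega, show b+1+k = (b+k)+1 from by omega]
    rw [Nat.factorial_succ, Nat.cast_mul, mul_pow,
      pow_succ ((((b+k).factorial : ℕ)):ℚ) k, ih]
    ring

lemma reflK (g : ℕ → ℚ) (K : ℕ) : ∏ i ∈ range (K+1), g (K - i) = ∏ i ∈ range (K+1), g i := by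
  have := Finset.prod_range_reflect g (K+1)
  simpa using this

lemma prodIcc (a t : ℕ) : ∏ i ∈ Icc 1 t, ((a+i : ℕ) : ℚ)
    = ((a+t).factorial : ℚ) / (a.factorial : ℚ) := by
  induction t with
  | zero =>
    rw [Finset.Icc_eq_empty (by omega), Nat.add_zero,
      div_self (Nat.cast_ne_zero.mpr a.factorial_ne_zero), Finset.prod_empty]
  | succ t ih =>
    rw [prod_Icc_succ_top (by omega), ih, show a+(t+1) = (a+t)+1 from by omega,
      Nat.factorial_succ]
    have h : (a.factorial : ℚ) ≠ 0 := Nat.cast_ne_zero.mpr a.factorial_ne_zero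
    field_simp
    push_cast
    ring

lemma rhs_eq (k t n : ℕ) :
    ∏ i ∈ Icc 1 t, ∏ j ∈ Icc 1 k, ((i + j + n - 1 : ℚ) / (i + j - 1 : ℚ))
    = ∏ j ∈ range k, (((n+t+j).factorial : ℚ) * (j.factorial:ℚ)) /
        (((n+j).factorial:ℚ) * ((t+j).factorial:ℚ)) := by
  rw [Finset.prod_comm, ← Finset.Ico_add_one_right_eq_Icc, Finset.prod_Ico_eq_prod_range]
  simp only [Nat.add_sub_cancel]
  refine Finset.prod_congr rfl fun j _ => ?_
  have hb : ((n+j).factorial : ℚ) ≠ 0 := Nat.cast_ne_zero.mpr (n+j).factorial_ne_zero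
  have hc : ((j+t).factorial : ℚ) ≠ 0 := Nat.cast_ne_zero.mpr (j+t).factorial_ne_zero
  have hd : (j.factorial : ℚ) ≠ 0 := Nat.cast_ne_zero.mpr j.factorial_ne_zero
  calc ∏ i ∈ Icc 1 t, ((i:ℚ) + (1+j : ℕ) + n - 1) / ((i:ℚ) + (1+j:ℕ) - 1)
      = ∏ i ∈ Icc 1 t, (((n+j)+i : ℕ):ℚ)/(((j+i : ℕ)):ℚ) := by
        refine Finset.prod_congr rfl fun i _ => ?_
        push_cast
        ring
    _ = (((n+j+t).factorial:ℚ)/((n+j).factorial:ℚ)) /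
          (((j+t).factorial:ℚ)/((j).factorial:ℚ)) := by
        rw [prod_div_distrib, prodIcc, prodIcc]
    _ = _ := by
        rw [show n+j+t = n+t+j from by omega, show j+t = t+j from by omega] at *
        field_simp

lemma lhs_eq (K t n : ℕ) (ht : 0 < t) :
    ∏ i ∈ Finset.Icc 1 (K+1),
        (((Nat.factorial (n + (K+1) + t - 1) : ℚ) * (Nat.factorial (i - 1) : ℚ)) /
          ((Nat.factorial (n + i - 1) : ℚ) * (Nat.factorial (t + (K+1) - i) : ℚ) *
            ((n + t + (K+1) - i : ℕ) : ℚ) ^ ((K+1) - i)))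
    = ∏ j ∈ range (K+1), (((n+t+j).factorial : ℚ) * (j.factorial:ℚ)) /
        (((n+j).factorial:ℚ) * ((t+j).factorial:ℚ)) := by
  rw [← Finset.Ico_add_one_right_eq_Icc, Finset.prod_Ico_eq_prod_range]
  simp only [Nat.add_sub_cancel]
  have step1 : ∏ j ∈ range (K+1),
      (((Nat.factorial (n + (K+1) + t - 1) : ℚ) * (Nat.factorial (1 + j - 1) : ℚ)) /
        ((Nat.factorial (n + (1+j) - 1) : ℚ) * (Nat.factorial (t + (K+1) - (1+j)) : ℚ) *
          ((n + t + (K+1) - (1+j) : ℕ) : ℚ) ^ ((K+1) - (1+j))))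
      = ∏ j ∈ range (K+1),
        ((((n+K+t).factorial : ℚ) * ((j).factorial : ℚ)) /
          (((n+j).factorial : ℚ) * (((t+(K-j)).factorial : ℚ) *
            ((n + t + (K-j) : ℕ) : ℚ) ^ (K-j)))) := by
    refine Finset.prod_congr rfl fun j hj => ?_
    have hj' : j ≤ K := by have := Finset.mem_range.mp hj; omega
    rw [show n+(K+1)+t-1 = n+K+t from by omega, show 1+j-1 = j from by omega,
      show n+(1+j)-1 = n+j from by omega, show t+(K+1)-(1+j) = t+(K-j) from by omega,
      show n+t+(K+1)-(1+j) = n+t+(K-j) from by omega, show (K+1)-(1+j) = K-j from by omega,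
      mul_assoc]
  rw [step1]
  rw [prod_div_distrib, prod_mul_distrib, prod_mul_distrib, prod_const, card_range]
  rw [prod_mul_distrib]
  rw [reflK (fun m => ((t+m).factorial : ℚ)) K,
    reflK (fun m => ((n + t + m : ℕ) : ℚ) ^ m) K]
  have key : ((n+K+t).factorial : ℚ)^(K+1)
      = (∏ m ∈ range (K+1), ((n+t+m).factorial : ℚ)) *
        ∏ m ∈ range (K+1), ((n+t+m : ℕ) : ℚ)^m := by
    have h := keyL (n+t-1) (K+1)
    rw [show n+t-1+(K+1) = n+K+t from by omega] at h
    rw [h]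
    congr 1 <;> exact Finset.prod_congr rfl fun m _ => by
      rw [show n+t-1+1+m = n+t+m from by omega]
  rw [key]
  conv_rhs => rw [prod_div_distrib, prod_mul_distrib, prod_mul_distrib]
  have hP : (∏ m ∈ range (K+1), ((n+t+m : ℕ) : ℚ)^m) ≠ 0 := by
    refine Finset.prod_ne_zero_iff.mpr fun m _ => ?_
    have : (0:ℚ) < ((n+t+m : ℕ) : ℚ) := by exact_mod_cast Nat.pos_of_ne_zero (by omega)
    positivity
  have hC : (∏ m ∈ range (K+1), ((n+m).factorial : ℚ)) ≠ 0 :=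
    Finset.prod_ne_zero_iff.mpr fun m _ => Nat.cast_ne_zero.mpr (n+m).factorial_ne_zero
  have hD : (∏ m ∈ range (K+1), ((t+m).factorial : ℚ)) ≠ 0 :=
    Finset.prod_ne_zero_iff.mpr fun m _ => Nat.cast_ne_zero.mpr (t+m).factorial_ne_zero
  field_simp

theorem stmt11 (k t n : ℕ) (hk : 0 < k) (ht : 0 < t) :
    ∏ i ∈ Finset.Icc 1 k,
        (((Nat.factorial (n + k + t - 1) : ℚ) * (Nat.factorial (i - 1) : ℚ)) /
          ((Nat.factorial (n + i - 1) : ℚ) * (Nat.factorial (t + k - i) : ℚ) *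
            ((n + t + k - i : ℕ) : ℚ) ^ (k - i)))
      = ∏ i ∈ Finset.Icc 1 t, ∏ j ∈ Finset.Icc 1 k,
          ((i + j + n - 1 : ℚ) / (i + j - 1 : ℚ)) := by
  obtain ⟨K, rfl⟩ : ∃ K, k = K + 1 := ⟨k - 1, by omega⟩
  exact (lhs_eq K t n ht).trans (rhs_eq (K+1) t n).symm
end

section
/- For all positive integers k and nonnegative integers n, \sum_{i=1}^{k} \frac{1}{i} \binom{k-1}{i-1} \binom{k}{i-1} \binom{2k+n-i+1}{n-i+1} = \frac{1}{n+k+1} \binom{n+k+1}{k+1} \binom{n+k+1}{k}, where terms with n-i+1 < 0 are zero. -/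
open Finset

def narB (k j : ℕ) : ℚ :=
  (1 / ((j : ℚ) + 1)) * (Nat.choose (k - 1) j : ℚ) * (Nat.choose k j : ℚ)

def narS (k n j : ℕ) : ℚ :=
  narB k j * (if j ≤ n then (Nat.choose (2 * k + n - j) (n - j) : ℚ) else 0)

lemma narB_ratio (k m : ℕ) (h : m + 2 ≤ k) :
    ((k : ℚ) - 1 - m) * ((k : ℚ) - m) * narB k m
      = ((m : ℚ) + 2) * ((m : ℚ) + 1) * narB k (m + 1) := by
  have h1 := Nat.choose_succ_right_eq (k - 1) m
  have h2 := Nat.choose_succ_right_eq k m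
  rw [show k - 1 - m = k - (m + 1) from by omega] at h1
  have hq1 : (Nat.choose (k - 1) (m + 1) : ℚ) * ((m : ℚ) + 1)
      = (Nat.choose (k - 1) m : ℚ) * ((k : ℚ) - 1 - m) := by
    have := congrArg (fun x : ℕ => (x : ℚ)) h1
    push_cast [Nat.cast_sub (show m + 1 ≤ k by omega)] at this
    linear_combination this
  have hq2 : (Nat.choose k (m + 1) : ℚ) * ((m : ℚ) + 1)
      = (Nat.choose k m : ℚ) * ((k : ℚ) - m) := by
    have := congrArg (fun x : ℕ => (x : ℚ)) h2
    push_cast [Nat.cast_sub (show m ≤ k by omega)] at this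
    linear_combination this
  have hm1 : ((m : ℚ) + 1) ≠ 0 := by positivity
  have hm2 : ((m : ℚ) + 2) ≠ 0 := by positivity
  rw [narB, narB]
  push_cast
  field_simp
  linear_combination (-((m : ℚ) + 2)) * ((Nat.choose k (m + 1) : ℚ) * ((m : ℚ) + 1) * hq1 + (Nat.choose (k - 1) m : ℚ) * ((k : ℚ) - 1 - m) * hq2)

def narW (k n : ℕ) : ℕ → ℚ
  | 0 => 0
  | (m + 1) => ((k : ℚ) - 1 - m) * ((k : ℚ) - m) * narS k n m

lemma choose_top (k n j : ℕ) (hj : j ≤ n) :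
    (2 * (k : ℚ) + n + 1 - j) * (Nat.choose (2 * k + n - j) (n - j) : ℚ)
      = (Nat.choose (2 * k + (n + 1) - j) ((n + 1) - j) : ℚ) * ((n : ℚ) + 1 - j) := by
  have hh := Nat.add_one_mul_choose_eq (2 * k + n - j) (n - j)
  rw [show 2 * k + n - j + 1 = 2 * k + (n + 1) - j from by omega,
      show n - j + 1 = (n + 1) - j from by omega] at hh
  have hc := congrArg (fun x : ℕ => (x : ℚ)) hh
  push_cast [Nat.cast_sub (show j ≤ 2 * k + (n + 1) by omega),
    Nat.cast_sub (show j ≤ n + 1 by omega)] at hc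
  linear_combination hc

lemma nar_step (k n j : ℕ) (hj : j < k) :
    ((n : ℚ) + 1) * ((n : ℚ) + 2) * narS k (n + 1) j
      = ((n : ℚ) + k + 1) * ((n : ℚ) + k + 2) * narS k n j
        - narW k n (j + 1) + narW k n j := by
  rcases le_or_gt j n with hjn | hjn
  · -- main case : j ≤ n
    have hS2 : narS k n j = narB k j * (Nat.choose (2 * k + n - j) (n - j) : ℚ) := by
      rw [narS, if_pos hjn]
    have hW1 : narW k n (j + 1)
        = ((k : ℚ) - 1 - j) * ((k : ℚ) - j) * narS k n j := rfl
    have hh := choose_top k n j hjn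
    cases j with
    | zero =>
      have hS1 : narS k (n + 1) 0
          = narB k 0 * (Nat.choose (2 * k + (n + 1)) (n + 1) : ℚ) := by
        rw [narS, if_pos (by omega), Nat.sub_zero, Nat.sub_zero]
      have hW0 : narW k n 0 = 0 := rfl
      simp only [Nat.sub_zero, Nat.cast_zero, sub_zero] at hh hS2 hW1 ⊢
      rw [hS1, hW1, hS2, hW0]
      linear_combination (-(narB k 0) * ((n : ℚ) + 2)) * hh
    | succ m =>
      have hS1 : narS k (n + 1) (m + 1)
          = narB k (m + 1) * (Nat.choose (2 * k + n - m) (n - m) : ℚ) := by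
        rw [narS, if_pos (by omega),
          show 2 * k + (n + 1) - (m + 1) = 2 * k + n - m from by omega,
          show (n + 1) - (m + 1) = n - m from by omega]
      have hW2 : narW k n (m + 1)
          = ((k : ℚ) - 1 - m) * ((k : ℚ) - m) * narS k n m := rfl
      have hS3 : narS k n m = narB k m * (Nat.choose (2 * k + n - m) (n - m) : ℚ) := by
        rw [narS, if_pos (by omega)]
      have hr := narB_ratio k m (by omega)
      rw [show 2 * k + (n + 1) - (m + 1) = 2 * k + n - m from by omega,
        show (n + 1) - (m + 1) = n - m from by omega] at hh
      rw [hS1, hW1, hS2, hW2, hS3]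
      push_cast at hh ⊢
      linear_combination (-(Nat.choose (2 * k + n - m) (n - m) : ℚ)) * hr
        - narB k (m + 1) * ((n : ℚ) + m + 3) * hh
  · rcases eq_or_lt_of_le (show n + 1 ≤ j from hjn) with hjn1 | hjn2
    · -- j = n + 1
      subst hjn1
      have hS1 : narS k (n + 1) (n + 1) = narB k (n + 1) := by
        rw [narS, if_pos le_rfl, show 2 * k + (n + 1) - (n + 1) = 2 * k from by omega,
          Nat.sub_self, Nat.choose_zero_right, Nat.cast_one, mul_one]
      have hS2 : narS k n (n + 1) = 0 := by rw [narS, if_neg (by omega), mul_zero]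
      have hW1 : narW k n (n + 1 + 1)
          = ((k : ℚ) - 1 - ((n + 1 : ℕ) : ℚ)) * ((k : ℚ) - ((n + 1 : ℕ) : ℚ))
            * narS k n (n + 1) := rfl
      have hW2 : narW k n (n + 1) = ((k : ℚ) - 1 - n) * ((k : ℚ) - n) * narS k n n := rfl
      have hS3 : narS k n n = narB k n := by
        rw [narS, if_pos le_rfl, show 2 * k + n - n = 2 * k from by omega,
          Nat.sub_self, Nat.choose_zero_right, Nat.cast_one, mul_one]
      have hr := narB_ratio k n (by omega)
      rw [hS1, hS2, hW1, hW2, hS2, hS3]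
      push_cast
      linear_combination -hr
    · -- j ≥ n + 2 : everything vanishes
      have hS1 : narS k (n + 1) j = 0 := by rw [narS, if_neg (by omega), mul_zero]
      have hS2 : narS k n j = 0 := by rw [narS, if_neg (by omega), mul_zero]
      obtain ⟨m, rfl⟩ : ∃ m, j = m + 1 := ⟨j - 1, by omega⟩
      have hW1 : narW k n (m + 1 + 1)
          = ((k : ℚ) - 1 - ((m + 1 : ℕ) : ℚ)) * ((k : ℚ) - ((m + 1 : ℕ) : ℚ))
            * narS k n (m + 1) := rfl
      have hW2 : narW k n (m + 1) = ((k : ℚ) - 1 - m) * ((k : ℚ) - m) * narS k n m := rfl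
      have hS3 : narS k n m = 0 := by rw [narS, if_neg (by omega), mul_zero]
      rw [hS1, hS2, hW1, hW2, hS2, hS3]
      ring

lemma nar_key (k : ℕ) (hk : 0 < k) (N : ℕ) :
    ∑ j ∈ Finset.range k, narS k N j
      = (1 / ((N : ℚ) + k + 1)) * (Nat.choose (N + k + 1) (k + 1) : ℚ) *
          (Nat.choose (N + k + 1) k : ℚ) := by
  induction N with
  | zero =>
    rw [Finset.sum_eq_single 0]
    · have : narS k 0 0 = 1 := by
        rw [narS, if_pos le_rfl, narB]
        norm_num
      rw [this, show 0 + k + 1 = k + 1 from by omega, Nat.choose_self,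
        Nat.choose_succ_self_right]
      have : ((k : ℚ) + 1) ≠ 0 := by positivity
      push_cast
      field_simp
      ring
    · intro j _ hne
      rw [narS, if_neg (by omega), mul_zero]
    · intro h
      exact absurd (Finset.mem_range.mpr hk) h
  | succ n ih =>
    have hsum : ((n : ℚ) + 1) * ((n : ℚ) + 2) * ∑ j ∈ Finset.range k, narS k (n + 1) j
        = ((n : ℚ) + k + 1) * ((n : ℚ) + k + 2) * ∑ j ∈ Finset.range k, narS k n j := by
      rw [Finset.mul_sum, Finset.mul_sum]
      have hterm : ∀ j ∈ Finset.range k,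
          ((n : ℚ) + 1) * ((n : ℚ) + 2) * narS k (n + 1) j
            = (((n : ℚ) + k + 1) * ((n : ℚ) + k + 2) * narS k n j)
              + (narW k n j - narW k n (j + 1)) := by
        intro j hjk
        have := nar_step k n j (Finset.mem_range.mp hjk)
        linarith
      rw [Finset.sum_congr rfl hterm, Finset.sum_add_distrib,
        Finset.sum_range_sub' (narW k n) k]
      have hwk : narW k n k = 0 := by
        obtain ⟨m, rfl⟩ : ∃ m, k = m + 1 := ⟨k - 1, by omega⟩
        have : narW (m + 1) n (m + 1)
            = (((m + 1 : ℕ) : ℚ) - 1 - m) * (((m + 1 : ℕ) : ℚ) - m) * narS (m + 1) n m := rfl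
        rw [this]
        push_cast
        ring
      rw [hwk, show narW k n 0 = 0 from rfl]
      ring
    have h1 : (Nat.choose (n + k + 1) (k + 1)) * (n + k + 2)
        = Nat.choose (n + k + 2) (k + 1) * (n + 1) := by
      have := Nat.choose_mul_succ_eq (n + k + 1) (k + 1)
      rwa [show n + k + 1 + 1 = n + k + 2 from by omega,
        show n + k + 2 - (k + 1) = n + 1 from by omega] at this
    have h2 : (Nat.choose (n + k + 1) k) * (n + k + 2)
        = Nat.choose (n + k + 2) k * (n + 2) := by
      have := Nat.choose_mul_succ_eq (n + k + 1) k
      rwa [show n + k + 1 + 1 = n + k + 2 from by omega,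
        show n + k + 2 - k = n + 2 from by omega] at this
    have hq1 : (Nat.choose (n + k + 1) (k + 1) : ℚ) * ((n : ℚ) + k + 2)
        = (Nat.choose (n + k + 2) (k + 1) : ℚ) * ((n : ℚ) + 1) := by
      exact_mod_cast congrArg (fun x : ℕ => (x : ℚ)) h1
    have hq2 : (Nat.choose (n + k + 1) k : ℚ) * ((n : ℚ) + k + 2)
        = (Nat.choose (n + k + 2) k : ℚ) * ((n : ℚ) + 2) := by
      exact_mod_cast congrArg (fun x : ℕ => (x : ℚ)) h2
    rw [ih] at hsum
    rw [show n + 1 + k + 1 = n + k + 2 from by omega]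
    have hx : ((n : ℚ) + 1) * ((n : ℚ) + 2) ≠ 0 := by positivity
    refine mul_left_cancel₀ hx ?_
    rw [hsum]
    have hd1 : ((n : ℚ) + k + 1) ≠ 0 := by positivity
    have hd2 : ((n : ℚ) + k + 2) ≠ 0 := by positivity
    push_cast
    field_simp
    linear_combination ((Nat.choose (n + k + 1) k : ℚ) * ((n : ℚ) + k + 2) * hq1
      + (Nat.choose (n + k + 2) (k + 1) : ℚ) * ((n : ℚ) + 1) * hq2)

/-- Narayana-number expansion:
`∑_{i=1}^k (1/i) C(k-1,i-1) C(k,i-1) C(2k+n-i+1, n-i+1)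
  = (1/(n+k+1)) C(n+k+1,k+1) C(n+k+1,k)`,
where terms with `n - i + 1 < 0` (i.e. `i > n + 1`) are zero. -/
theorem stmt12 (k n : ℕ) (hk : 0 < k) :
    ∑ i ∈ Finset.Icc 1 k,
        (1 / (i : ℚ)) * (Nat.choose (k - 1) (i - 1) : ℚ) * (Nat.choose k (i - 1) : ℚ) *
          (if i ≤ n + 1 then (Nat.choose (2 * k + n + 1 - i) (n + 1 - i) : ℚ) else 0)
      = (1 / ((n : ℚ) + k + 1)) * (Nat.choose (n + k + 1) (k + 1) : ℚ) *
          (Nat.choose (n + k + 1) k : ℚ) := by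
  rw [← Finset.Ico_add_one_right_eq_Icc, Finset.sum_Ico_eq_sum_range]
  rw [show k + 1 - 1 = k from rfl]
  rw [← nar_key k hk n]
  refine Finset.sum_congr rfl fun j hj => ?_
  rw [narS, narB]
  rw [show 1 + j - 1 = j from by omega,
    show 2 * k + n + 1 - (1 + j) = 2 * k + n - j from by omega,
    show n + 1 - (1 + j) = n - j from by omega]
  have : (1 + j ≤ n + 1) = (j ≤ n) := by simp [Nat.add_le_add_iff_left]; omega
  push_cast
  rw [show ((1 : ℚ) + j) = (j : ℚ) + 1 from by ring]
  congr 1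
  simp only [this]
end

section
/- For all positive integers k and nonnegative integers n, \frac{1}{n+k+1}\binom{n+k+1}{k+1}\binom{n+k+1}{k} = \binom{k+n+1}{n}^2 - \binom{k+n+2}{n+1}\binom{k+n}{n-1}, where \binom{k+n}{n-1} = 0 when n = 0. -/
/-- `C(k+n, n-1)` (zero when `n = 0`) is written as the symmetric
`C(k+n, k+1)`. -/
theorem stmt13 (k n : ℕ) (hk : 0 < k) :
    (1 / ((n : ℚ) + k + 1)) * (Nat.choose (n + k + 1) (k + 1) : ℚ) *
        (Nat.choose (n + k + 1) k : ℚ)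
      = (Nat.choose (k + n + 1) n : ℚ) ^ 2 -
          (Nat.choose (k + n + 2) (n + 1) : ℚ) * (Nat.choose (k + n) (k + 1) : ℚ) := by
  have h1 : (k + n + 1).choose n = (n + k + 1).choose (k + 1) := by
    rw [show k + n + 1 = n + k + 1 by ring]
    rw [← Nat.choose_symm (by omega : n ≤ n + k + 1)]
    congr 1; omega
  have h2 : (k + n + 2).choose (n + 1) = (n + k + 1).choose (k + 1) + (n + k + 1).choose k := by
    rw [show k + n + 2 = (n + k + 1) + 1 by ring,
      ← Nat.choose_symm (by omega : n + 1 ≤ n + k + 2)]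
    rw [show n + k + 1 + 1 - (n + 1) = k + 1 by omega]
    rw [Nat.choose_succ_succ]
    simp [Nat.succ_eq_add_one, Nat.add_comm]
  have h3 : (n + k).choose (k + 1) * (n + k + 1) = (n + k + 1).choose (k + 1) * n := by
    rw [Nat.choose_mul_succ_eq (n + k) (k + 1)]
    congr 1; omega
  have h4 : (n + k + 1).choose (k + 1) * (k + 1) = (n + k + 1).choose k * (n + 1) := by
    rw [Nat.choose_succ_right_eq]
    congr 1; omega
  have h3q : ((n + k).choose (k + 1) : ℚ) * ((n : ℚ) + k + 1)
      = ((n + k + 1).choose (k + 1) : ℚ) * n := by exact_mod_cast congrArg (Nat.cast (R := ℚ)) h3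
  have h4q : ((n + k + 1).choose (k + 1) : ℚ) * ((k : ℚ) + 1)
      = ((n + k + 1).choose k : ℚ) * ((n : ℚ) + 1) := by
    exact_mod_cast congrArg (Nat.cast (R := ℚ)) h4
  have hN : ((n : ℚ) + k + 1) ≠ 0 := by positivity
  rw [h1, h2, show k + n = n + k by ring]
  push_cast
  field_simp
  linear_combination ((Nat.choose (n + k + 1) (k + 1) : ℚ) + (Nat.choose (n + k + 1) k : ℚ)) * h3q - (Nat.choose (n + k + 1) (k + 1) : ℚ) * h4q
end
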